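/- For any two Boolean networks f, g of dimension n, the following are equivalent: (1) MT(f) = MT(g); (2) M(f) = M(g) and T_f(x) = T_g(x) for all x ∈ M(f); (3) T_f(x) = T_g(x) for all x ∈ M(f) ∪ M(g); (4) f^M = g^M. -/

import Mathlib

/-!  Common definitions: Boolean networks on `Fin n → Bool`. -/

/-- The update `f^{(S)}` of the coordinates in `S` according to `f`. -/
def upd {n : ℕ} (f : (Fin n → Bool) → Fin n → Bool) (S : Finset (Fin n)) :
    (Fin n → Bool) → Fin n → Bool :=
  fun x i => if i ∈ S then f x i else x i

/-- `f^{(S,T)} = f^{(T)} ∘ f^{(S)}`. -/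
def upd2 {n : ℕ} (f : (Fin n → Bool) → Fin n → Bool) (S T : Finset (Fin n)) :
    (Fin n → Bool) → Fin n → Bool :=
  upd f T ∘ upd f S

/-- `Δ(x,y)`, the set of coordinates where `x` and `y` differ. -/
def delta {n : ℕ} (x y : Fin n → Bool) : Set (Fin n) := {i | x i ≠ y i}

/-- Hamming distance. -/
noncomputable def hdist {n : ℕ} (x y : Fin n → Bool) : ℕ := (delta x y).ncard

/-- The interval (subcube) `[x,y]`. -/
def interval {n : ℕ} (x y : Fin n → Bool) : Set (Fin n → Bool) :=
  {z | delta x z ⊆ delta x y}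

/-- A subcube of `𝔹^n`: fix the coordinates in `S` to `0` and those in `T` to `1`. -/
def IsSubcube {n : ℕ} (X : Set (Fin n → Bool)) : Prop :=
  ∃ S T : Set (Fin n), Disjoint S T ∧
    X = {x | (∀ i ∈ S, x i = false) ∧ (∀ i ∈ T, x i = true)}

/-- The partial order `f ⊑ g` on Boolean networks. -/
def BNle {n : ℕ} (f g : (Fin n → Bool) → Fin n → Bool) : Prop :=
  ∀ x, delta x (f x) ⊆ delta x (g x)

/-- A trapspace of `f`: an invariant subcube. -/
def IsTrapspace {n : ℕ} (f : (Fin n → Bool) → Fin n → Bool)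
    (X : Set (Fin n → Bool)) : Prop :=
  IsSubcube X ∧ ∀ x ∈ X, f x ∈ X

/-- The collection of all trapspaces of `f`. -/
def trapspaces {n : ℕ} (f : (Fin n → Bool) → Fin n → Bool) :
    Set (Set (Fin n → Bool)) :=
  {X | IsTrapspace f X}

/-- The principal trapspace `T_f(x)`: the smallest trapspace of `f` containing `x`. -/
def Tprin {n : ℕ} (f : (Fin n → Bool) → Fin n → Bool) (x : Fin n → Bool) :
    Set (Fin n → Bool) :=
  ⋂₀ {X | IsTrapspace f X ∧ x ∈ X}

/-- The collection of principal trapspaces of `f`. -/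
def PT {n : ℕ} (f : (Fin n → Bool) → Fin n → Bool) : Set (Set (Fin n → Bool)) :=
  {X | ∃ x, X = Tprin f x}

-- The opposite of `x` in a subcube `X` containing `x`: the coordinate `i` is flipped
-- iff some element of `X` differs from `x` there; so `[x, opp X x] = X` when `X` is a
-- subcube containing `x`.
open scoped Classical in
noncomputable def opp {n : ℕ} (X : Set (Fin n → Bool)) (x : Fin n → Bool) :
    Fin n → Bool :=
  fun i => if ∃ y ∈ X, y i ≠ x i then !(x i) else x i

/-- The trapping closure `f^T`, characterised by `[x, f^T(x)] = T_f(x)`. -/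
noncomputable def trapClosure {n : ℕ} (f : (Fin n → Bool) → Fin n → Bool) :
    (Fin n → Bool) → Fin n → Bool :=
  fun x => opp (Tprin f x) x

/-- The general asynchronous graph of `f`, as a relation on `𝔹^n`. -/
def GA {n : ℕ} (f : (Fin n → Bool) → Fin n → Bool) :
    (Fin n → Bool) → (Fin n → Bool) → Prop :=
  fun x y => ∃ S : Finset (Fin n), y = upd f S x

/-- The asynchronous graph of `f`, as a relation on `𝔹^n`. -/
def Agraph {n : ℕ} (f : (Fin n → Bool) → Fin n → Bool) :
    (Fin n → Bool) → (Fin n → Bool) → Prop :=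
  fun x y => ∃ i : Fin n, y = upd f {i} x

/-- The trapping graph of `f`: an edge `(x,y)` iff `y ∈ T_f(x)`. -/
def TG {n : ℕ} (f : (Fin n → Bool) → Fin n → Bool) :
    (Fin n → Bool) → (Fin n → Bool) → Prop :=
  fun x y => y ∈ Tprin f x

/-- A network is trapping if its general asynchronous graph is transitive. -/
def IsTrapping {n : ℕ} (f : (Fin n → Bool) → Fin n → Bool) : Prop :=
  Transitive (GA f)

/-- A commutative Boolean network: `f^{(i,j)} = f^{(j,i)}` for all `i,j`. -/
def IsCommutative' {n : ℕ} (f : (Fin n → Bool) → Fin n → Bool) : Prop :=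
  ∀ i j : Fin n, upd2 f {i} {j} = upd2 f {j} {i}

/-- `𝒜(x)`: the intersection of all members of `𝒜` containing `x`
(`= 𝔹^n` if no member contains `x`, since `⋂₀ ∅ = univ`). -/
def collAt {n : ℕ} (𝒜 : Set (Set (Fin n → Bool))) (x : Fin n → Bool) :
    Set (Fin n → Bool) :=
  ⋂₀ {A ∈ 𝒜 | x ∈ A}

/-- The network `F(𝒜)`, characterised by `[x, F(𝒜)(x)] = 𝒜(x)`. -/
noncomputable def Fnet {n : ℕ} (𝒜 : Set (Set (Fin n → Bool))) :
    (Fin n → Bool) → Fin n → Bool :=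
  fun x => opp (collAt 𝒜 x) x

/-- A collection of subcubes is pre-principal if `𝒬 = {𝒬(x) : x ∈ 𝔹^n}`. -/
def PrePrincipal {n : ℕ} (𝒬 : Set (Set (Fin n → Bool))) : Prop :=
  𝒬 = {X | ∃ x, X = collAt 𝒬 x}

/-- `λ(𝒜)`: unions of subcollections of `𝒜` that are subcubes. -/
def lamColl {n : ℕ} (𝒜 : Set (Set (Fin n → Bool))) : Set (Set (Fin n → Bool)) :=
  {X | ∃ ℛ ⊆ 𝒜, X = ⋃₀ ℛ ∧ IsSubcube X}

/-- `μ(𝒜) = {𝒜(x) : x ∈ 𝔹^n}`. -/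
def muColl {n : ℕ} (𝒜 : Set (Set (Fin n → Bool))) : Set (Set (Fin n → Bool)) :=
  {X | ∃ x, X = collAt 𝒜 x}

/-- A pre-ideal collection of subcubes. -/
def PreIdeal {n : ℕ} (𝒥 : Set (Set (Fin n → Bool))) : Prop :=
  Set.univ ∈ 𝒥 ∧
  (∀ A ∈ 𝒥, ∀ B ∈ 𝒥, (A ∩ B).Nonempty → A ∩ B ∈ 𝒥) ∧
  (∀ ℛ ⊆ 𝒥, IsSubcube (⋃₀ ℛ) → ⋃₀ ℛ ∈ 𝒥)

/-- The collection of minimal trapspaces of `f`. -/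
def MT {n : ℕ} (f : (Fin n → Bool) → Fin n → Bool) : Set (Set (Fin n → Bool)) :=
  {X | IsTrapspace f X ∧ ∀ Y, IsTrapspace f Y → ¬ Y ⊂ X}

/-- `M(f)`: the union of the minimal trapspaces of `f`. -/
def Mset {n : ℕ} (f : (Fin n → Bool) → Fin n → Bool) : Set (Fin n → Bool) :=
  ⋃₀ MT f

-- The min-trapping extension `f^M`: `[x, f^M(x)] = T_f(x)` if `x ∈ M(f)`,
-- and `f^M(x) = ¬x` otherwise.
open scoped Classical in
noncomputable def minExt {n : ℕ} (f : (Fin n → Bool) → Fin n → Bool) :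
    (Fin n → Bool) → Fin n → Bool :=
  fun x => if x ∈ Mset f then opp (Tprin f x) x else fun i => !(x i)

/-!
Every point `x` of a minimal trapspace `X` has `T_f(x) = X`, so `MT(f)` is the set of principal
trapspaces `T_f(x)` with `x ∈ M(f)`; this gives `(1) ⇔ (2) ⇔ (3)`. The interval `[x, f^M(x)]` is
`T_f(x)` on `M(f)` and the whole cube elsewhere, so `f^M` records `T_f` on `M(f)`. It also
records `M(f)` itself: a point of `M(f) \ M(g)` would force `T_f(x) = 𝔹^n`, hence `M(f) = 𝔹^n`,
and then `g^M = f^M` would make `T_g(y) = 𝔹^n` for the points `y` of a minimal trapspace of `g`.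
-/

section BooleanNetwork

variable {n : ℕ}

def cubeAt (x : Fin n → Bool) (D : Set (Fin n)) : Set (Fin n → Bool) :=
  {z | ∀ i ∉ D, z i = x i}

lemma isSubcube_cubeAt (x : Fin n → Bool) (D : Set (Fin n)) : IsSubcube (cubeAt x D) := by
  refine ⟨{i | i ∉ D ∧ x i = false}, {i | i ∉ D ∧ x i = true}, ?_, ?_⟩
  · rw [Set.disjoint_left]
    rintro i ⟨-, hfalse⟩ ⟨-, htrue⟩
    simp [hfalse] at htrue
  · ext z
    constructor
    · intro hz
      exact ⟨fun i hi => (hz i hi.1).trans hi.2, fun i hi => (hz i hi.1).trans hi.2⟩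
    · rintro ⟨hfalse, htrue⟩ i hi
      cases hx : x i
      · exact hfalse i ⟨hi, hx⟩
      · exact htrue i ⟨hi, hx⟩

lemma IsSubcube.eq_cubeAt {X : Set (Fin n → Bool)} {x : Fin n → Bool}
    (h : IsSubcube X) (hx : x ∈ X) : X = cubeAt x {i | ∃ y ∈ X, y i ≠ x i} := by
  obtain ⟨S, T, -, rfl⟩ := h
  ext z
  refine ⟨fun hz i hi => ?_, fun hz => ⟨fun i hiS => ?_, fun i hiT => ?_⟩⟩
  · by_contra hne
    exact hi ⟨z, hz, hne⟩
  · rw [hz i fun ⟨y, hy, hyi⟩ => hyi ((hy.1 i hiS).trans (hx.1 i hiS).symm)]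
    exact hx.1 i hiS
  · rw [hz i fun ⟨y, hy, hyi⟩ => hyi ((hy.2 i hiT).trans (hx.2 i hiT).symm)]
    exact hx.2 i hiT

lemma IsSubcube.nonempty {X : Set (Fin n → Bool)} (h : IsSubcube X) : X.Nonempty := by
  classical
  obtain ⟨S, T, hST, rfl⟩ := h
  refine ⟨fun i => decide (i ∈ T), fun i hi => ?_, fun i hi => decide_eq_true hi⟩
  exact decide_eq_false (Set.disjoint_left.mp hST hi)

lemma isSubcube_sInter {𝒳 : Set (Set (Fin n → Bool))} {x : Fin n → Bool}
    (hsub : ∀ X ∈ 𝒳, IsSubcube X) (hx : ∀ X ∈ 𝒳, x ∈ X) : IsSubcube (⋂₀ 𝒳) := by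
  suffices ⋂₀ 𝒳 = cubeAt x {i | ∀ X ∈ 𝒳, ∃ y ∈ X, y i ≠ x i} from
    this ▸ isSubcube_cubeAt _ _
  ext z
  simp only [Set.mem_sInter, cubeAt, Set.mem_ofPred_eq, not_forall]
  constructor
  · rintro hz i ⟨X, hX, hi⟩
    have hzX : z ∈ X := hz X hX
    rw [(hsub X hX).eq_cubeAt (hx X hX)] at hzX
    exact hzX i hi
  · intro hz X hX
    rw [(hsub X hX).eq_cubeAt (hx X hX)]
    exact fun i hi => hz i ⟨X, hX, hi⟩

lemma delta_opp (X : Set (Fin n → Bool)) (x : Fin n → Bool) :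
    delta x (opp X x) = {i | ∃ y ∈ X, y i ≠ x i} := by
  ext i
  by_cases h : ∃ y ∈ X, y i ≠ x i <;> simp [delta, opp, h]

lemma interval_opp {X : Set (Fin n → Bool)} {x : Fin n → Bool}
    (h : IsSubcube X) (hx : x ∈ X) : interval x (opp X x) = X := by
  rw [interval, delta_opp]
  conv_rhs => rw [h.eq_cubeAt hx]
  ext z
  simp only [cubeAt, delta, Set.mem_ofPred_eq, Set.subset_def]
  refine ⟨fun hz i hi => ?_, fun hz i hi => ?_⟩
  · by_contra hne
    exact hi (hz i (Ne.symm hne))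
  · by_contra hD
    exact hi (hz i hD).symm

lemma interval_not (x : Fin n → Bool) : interval x (fun i => !x i) = Set.univ :=
  Set.eq_univ_of_forall fun _ i _ => by simp [delta]

lemma isTrapspace_univ (f : (Fin n → Bool) → Fin n → Bool) : IsTrapspace f Set.univ :=
  ⟨⟨∅, ∅, Set.disjoint_empty _, by simp⟩, fun _ _ => trivial⟩

lemma isTrapspace_sInter {f : (Fin n → Bool) → Fin n → Bool} {𝒳 : Set (Set (Fin n → Bool))}
    {x : Fin n → Bool} (htrap : ∀ X ∈ 𝒳, IsTrapspace f X) (hx : ∀ X ∈ 𝒳, x ∈ X) :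
    IsTrapspace f (⋂₀ 𝒳) :=
  ⟨isSubcube_sInter (fun X hX => (htrap X hX).1) hx,
    fun z hz => Set.mem_sInter.mpr fun X hX => (htrap X hX).2 z (hz X hX)⟩

variable {f g : (Fin n → Bool) → Fin n → Bool} {X : Set (Fin n → Bool)} {x : Fin n → Bool}

lemma mem_Tprin (f : (Fin n → Bool) → Fin n → Bool) (x : Fin n → Bool) : x ∈ Tprin f x :=
  Set.mem_sInter.mpr fun _ hX => hX.2

lemma Tprin_subset (hX : IsTrapspace f X) (hx : x ∈ X) : Tprin f x ⊆ X :=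
  Set.sInter_subset_of_mem ⟨hX, hx⟩

lemma isTrapspace_Tprin (f : (Fin n → Bool) → Fin n → Bool) (x : Fin n → Bool) :
    IsTrapspace f (Tprin f x) :=
  isTrapspace_sInter (fun _ hX => hX.1) fun _ hX => hX.2

lemma interval_opp_Tprin (f : (Fin n → Bool) → Fin n → Bool) (x : Fin n → Bool) :
    interval x (opp (Tprin f x) x) = Tprin f x :=
  interval_opp (isTrapspace_Tprin f x).1 (mem_Tprin f x)

lemma Tprin_eq_of_mem_MT (hX : X ∈ MT f) (hx : x ∈ X) : Tprin f x = X :=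
  (Tprin_subset hX.1 hx).eq_of_not_ssubset (hX.2 _ (isTrapspace_Tprin f x))

lemma Tprin_mem_MT (hx : x ∈ Mset f) : Tprin f x ∈ MT f := by
  obtain ⟨X, hX, hxX⟩ := Set.mem_sUnion.mp hx
  exact Tprin_eq_of_mem_MT hX hxX ▸ hX

lemma MT_nonempty (f : (Fin n → Bool) → Fin n → Bool) : (MT f).Nonempty := by
  obtain ⟨X, hX⟩ := exists_minimal_of_wellFoundedLT (IsTrapspace f) ⟨_, isTrapspace_univ f⟩
  exact ⟨X, hX.prop, fun _ hY => hX.not_lt hY⟩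

lemma interval_minExt_of_mem (hx : x ∈ Mset f) : interval x (minExt f x) = Tprin f x := by
  rw [minExt, if_pos hx, interval_opp_Tprin]

lemma interval_minExt_of_notMem (hx : x ∉ Mset f) : interval x (minExt f x) = Set.univ := by
  rw [minExt, if_neg hx, interval_not]

lemma MT_subset_of_Tprin_eq (h : ∀ x ∈ Mset f, Tprin f x = Tprin g x) : MT f ⊆ MT g := by
  intro X hX
  have hTg : ∀ y ∈ X, Tprin g y = X := fun y hy =>
    (h y (Set.mem_sUnion_of_mem hy hX)).symm.trans (Tprin_eq_of_mem_MT hX hy)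
  obtain ⟨x, hx⟩ := hX.1.1.nonempty
  refine ⟨hTg x hx ▸ isTrapspace_Tprin g x, fun Y hY hYX => ?_⟩
  obtain ⟨y, hy⟩ := hY.1.nonempty
  exact hYX.not_subset (hTg y (hYX.subset hy) ▸ Tprin_subset hY hy)

lemma Mset_subset_of_minExt_eq (h : minExt f = minExt g) : Mset f ⊆ Mset g := by
  intro x hxf
  by_contra hxg
  have huniv_f : Set.univ ∈ MT f := by
    have hT : Tprin f x = Set.univ := by
      rw [← interval_minExt_of_mem hxf, h, interval_minExt_of_notMem hxg]
    exact hT ▸ Tprin_mem_MT hxf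
  obtain ⟨Y, hY⟩ := MT_nonempty g
  obtain ⟨y, hy⟩ := hY.1.1.nonempty
  have hyg : y ∈ Mset g := Set.mem_sUnion_of_mem hy hY
  have huniv_g : Set.univ ∈ MT g := by
    have hT : Tprin g y = Set.univ := by
      rw [← interval_minExt_of_mem hyg, ← h,
        interval_minExt_of_mem (Set.mem_sUnion_of_mem (Set.mem_univ y) huniv_f),
        Tprin_eq_of_mem_MT huniv_f (Set.mem_univ y)]
    exact hT ▸ Tprin_mem_MT hyg
  exact hxg (Set.mem_sUnion_of_mem (Set.mem_univ _) huniv_g)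

end BooleanNetwork

/-- networks with the same minimal trapspaces. -/
theorem stmt9 (n : ℕ) (f g : (Fin n → Bool) → Fin n → Bool) :
    List.TFAE [
      MT f = MT g,
      Mset f = Mset g ∧ ∀ x ∈ Mset f, Tprin f x = Tprin g x,
      ∀ x ∈ Mset f ∪ Mset g, Tprin f x = Tprin g x,
      minExt f = minExt g
    ] := by
  tfae_have 1 → 2 := fun h => ⟨congrArg Set.sUnion h, fun x hx =>
    (Tprin_eq_of_mem_MT (h ▸ Tprin_mem_MT hx) (mem_Tprin f x)).symm⟩
  tfae_have 2 → 4 := by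
    rintro ⟨hM, hT⟩
    funext x
    by_cases hx : x ∈ Mset f
    · simp only [minExt, if_pos hx, if_pos (hM ▸ hx), hT x hx]
    · simp only [minExt, if_neg hx, if_neg (hM ▸ hx)]
  tfae_have 4 → 3 := by
    intro h x hx
    have hM : Mset f = Mset g :=
      (Mset_subset_of_minExt_eq h).antisymm (Mset_subset_of_minExt_eq h.symm)
    have hxf : x ∈ Mset f := by rwa [← hM, Set.union_self] at hx
    rw [← interval_minExt_of_mem hxf, h, interval_minExt_of_mem (hM ▸ hxf)]
  tfae_have 3 → 1 := fun h =>
    (MT_subset_of_Tprin_eq fun x hx => h x (Or.inl hx)).antisymm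
      (MT_subset_of_Tprin_eq fun x hx => (h x (Or.inr hx)).symm)
  tfae_finish
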